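/- arXiv:1605.00066 — 2 statements merged into one kernel-verified Lean document; each statement's English description precedes it below -/
import Mathlib

section
/- Let n ≥ 2, let a_1, ..., a_n be real numbers with a_m = 0 for some m ≠ j (where 1 ≤ j ≤ n), and let r_1, ..., r_{2n} be 2n pairwise distinct nonzero real numbers. Then the sum over i from 1 to 2n of [∏_{k≠j, 1≤k≤n} (r_i² + a_k²)] / [r_i · ∏_{g≠i, 1≤g≤2n} (r_i - r_g)] equals zero. -/
open Polynomial Finset

lemma basis_eq_C_nodalWeight_mul_nodal_erase {F : Type*} [Field F] {ι : Type*} [DecidableEq ι]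
    (s : Finset ι) (v : ι → F) (i : ι) :
    Lagrange.basis s v i = C (Lagrange.nodalWeight s v i) * Lagrange.nodal (s.erase i) v := by
  simp_rw [Lagrange.basis, Lagrange.basisDivisor, Lagrange.nodalWeight, prod_mul_distrib,
    map_prod, Lagrange.nodal]

lemma coeff_basis {F : Type*} [Field F] {ι : Type*} [DecidableEq ι]
    (s : Finset ι) (v : ι → F) (i : ι) (hi : i ∈ s) :
    (Lagrange.basis s v i).coeff (#s - 1) = Lagrange.nodalWeight s v i := by
  rw [basis_eq_C_nodalWeight_mul_nodal_erase, coeff_C_mul]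
  have hmonic : (Lagrange.nodal (s.erase i) v).Monic := Lagrange.nodal_monic
  have hdeg : (Lagrange.nodal (s.erase i) v).natDegree = #s - 1 := by
    rw [Lagrange.natDegree_nodal, card_erase_of_mem hi]
  rw [← hdeg, hmonic.coeff_natDegree, mul_one]

lemma sum_eval_mul_nodalWeight_eq_zero {F : Type*} [Field F] {ι : Type*} [DecidableEq ι]
    (s : Finset ι) (v : ι → F) (hvs : Set.InjOn v s) (f : F[X])
    (hf : f.degree < ((#s - 1 : ℕ) : WithBot ℕ)) (hs : 1 ≤ #s) :
    ∑ i ∈ s, f.eval (v i) * Lagrange.nodalWeight s v i = 0 := by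
  have hf' : f.degree < #s := lt_of_lt_of_le hf (by exact_mod_cast Nat.sub_le _ _)
  have heq := Lagrange.eq_interpolate hvs hf'
  have := congrArg (fun p => Polynomial.coeff p (#s - 1)) heq
  simp only [Lagrange.interpolate_apply, finset_sum_coeff, coeff_C_mul] at this
  rw [Polynomial.coeff_eq_zero_of_degree_lt hf] at this
  calc ∑ i ∈ s, f.eval (v i) * Lagrange.nodalWeight s v i
      = ∑ i ∈ s, f.eval (v i) * (Lagrange.basis s v i).coeff (#s - 1) :=
        Finset.sum_congr rfl fun i hi => by rw [coeff_basis s v i hi]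
    _ = 0 := this.symm

theorem entropy_product_flat (n : ℕ) (hn : 2 ≤ n) (a : Fin n → ℝ) (j : Fin n)
    (hzero : ∃ m : Fin n, m ≠ j ∧ a m = 0)
    (r : Fin (2 * n) → ℝ) (hr : Function.Injective r) (hr0 : ∀ i, r i ≠ 0) :
    ∑ i : Fin (2 * n),
      (∏ k ∈ Finset.univ.erase j, ((r i) ^ 2 + (a k) ^ 2)) /
        (r i * ∏ g ∈ Finset.univ.erase i, (r i - r g)) = 0 := by
  obtain ⟨m, hmj, hm⟩ := hzero
  set f : Polynomial ℝ := X * ∏ k ∈ (Finset.univ.erase j).erase m, (X ^ 2 + C ((a k) ^ 2)) with hf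
  have hcard : #(Finset.univ : Finset (Fin (2 * n))) = 2 * n := by simp
  have hn1 : 1 ≤ 2 * n := by omega
  -- degree bound
  have hdegf : f.degree < ((2 * n - 1 : ℕ) : WithBot ℕ) := by
    have h1 : f.natDegree ≤ 1 + 2 * #((Finset.univ.erase j).erase m) := by
      refine le_trans (natDegree_mul_le) ?_
      gcongr
      · exact natDegree_X_le
      · refine le_trans (natDegree_prod_le _ _) ?_
        rw [Finset.card_eq_sum_ones, Finset.mul_sum]
        refine Finset.sum_le_sum fun k _ => ?_
        refine le_trans (natDegree_add_le _ _) ?_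
        simp [natDegree_X_pow]
    have hcardm : #((Finset.univ.erase j).erase m) = n - 2 := by
      rw [Finset.card_erase_of_mem (Finset.mem_erase.mpr ⟨hmj, Finset.mem_univ m⟩),
        Finset.card_erase_of_mem (Finset.mem_univ j)]
      simp only [Finset.card_univ, Fintype.card_fin]
      omega
    have hnd : f.natDegree ≤ 2 * n - 3 := by omega
    calc f.degree ≤ (f.natDegree : WithBot ℕ) := degree_le_natDegree
      _ ≤ ((2 * n - 3 : ℕ) : WithBot ℕ) := by exact_mod_cast hnd
      _ < ((2 * n - 1 : ℕ) : WithBot ℕ) := by exact_mod_cast (by omega : 2 * n - 3 < 2 * n - 1)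
  have hinj : Set.InjOn r (Finset.univ : Finset (Fin (2 * n))) := fun x _ y _ h => hr h
  have key := sum_eval_mul_nodalWeight_eq_zero Finset.univ r hinj f
    (by rw [hcard]; exact hdegf) (by rw [hcard]; exact hn1)
  rw [← key]
  refine Finset.sum_congr rfl fun i _ => ?_
  have hprod : ∏ k ∈ Finset.univ.erase j, ((r i) ^ 2 + (a k) ^ 2)
      = (r i) ^ 2 * ∏ k ∈ (Finset.univ.erase j).erase m, ((r i) ^ 2 + (a k) ^ 2) := by
    rw [← Finset.mul_prod_erase _ _ (Finset.mem_erase.mpr ⟨hmj, Finset.mem_univ m⟩), hm]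
    ring_nf
  have hevalf : f.eval (r i) = r i * ∏ k ∈ (Finset.univ.erase j).erase m, ((r i) ^ 2 + (a k) ^ 2) := by
    simp [hf, eval_prod]
  have hD : (∏ g ∈ Finset.univ.erase i, (r i - r g)) ≠ 0 := by
    refine Finset.prod_ne_zero_iff.mpr fun g hg => ?_
    exact sub_ne_zero_of_ne fun h => (Finset.mem_erase.mp hg).1 (hr h).symm
  rw [hprod, hevalf, Lagrange.nodalWeight, Finset.prod_inv_distrib]
  field_simp [hr0 i]
end

section
/- Let n ≥ 2, let 1 ≤ j ≤ n, let λ be a real number, let a_1, ..., a_n be real numbers with a_m = 0 for some m ≠ j, and let r_1, ..., r_{2n+2} be 2n+2 pairwise distinct nonzero real numbers. Then the sum over i from 1 to 2n+2 of [(1 + λ r_i²) · ∏_{k≠j, 1≤k≤n} (r_i² + a_k²)] / [r_i · ∏_{g≠i, 1≤g≤2n+2} (r_i - r_g)] equals zero. -/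
open Polynomial Finset

lemma coeff_lagrange_basis {F : Type*} [Field F] {ι : Type*} [DecidableEq ι]
    {s : Finset ι} {v : ι → F} {i : ι} (hi : i ∈ s) :
    (Lagrange.basis s v i).coeff (#s - 1) = Lagrange.nodalWeight s v i := by
  have hb : Lagrange.basis s v i
      = C (Lagrange.nodalWeight s v i) * Lagrange.nodal (s.erase i) v := by
    rw [Lagrange.basis_eq_prod_sub_inv_mul_nodal_div hi, Lagrange.nodal_erase_eq_nodal_div hi]
  rw [hb, coeff_C_mul]
  have hdeg : (Lagrange.nodal (s.erase i) v).natDegree = #s - 1 := by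
    rw [Lagrange.natDegree_nodal, card_erase_of_mem hi]
  rw [← hdeg, (Lagrange.nodal_monic).coeff_natDegree, mul_one]

lemma sum_eval_div_prod_eq_zero {F : Type*} [Field F] {ι : Type*} [DecidableEq ι]
    (s : Finset ι) (v : ι → F) (hvs : Set.InjOn v s) (f : F[X])
    (hf : f.degree < (#s - 1 : ℕ)) :
    ∑ i ∈ s, f.eval (v i) / ∏ g ∈ s.erase i, (v i - v g) = 0 := by
  have hd : f.degree < (#s : ℕ) := by
    refine lt_of_lt_of_le hf ?_
    exact_mod_cast Nat.sub_le #s 1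
  have hinterp := Lagrange.eq_interpolate hvs hd
  have hcoeff : f.coeff (#s - 1) = 0 := by
    apply coeff_eq_zero_of_degree_lt
    exact hf
  rw [hinterp, Lagrange.interpolate_apply, finset_sum_coeff] at hcoeff
  rw [← hcoeff]
  refine Finset.sum_congr rfl fun i hi => ?_
  rw [coeff_C_mul, coeff_lagrange_basis hi, Lagrange.nodalWeight,
    div_eq_mul_inv, Finset.prod_inv_distrib]

theorem entropy_product_AdS (n : ℕ) (hn : 2 ≤ n) (lam : ℝ) (a : Fin n → ℝ) (j : Fin n)
    (hzero : ∃ m : Fin n, m ≠ j ∧ a m = 0)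
    (r : Fin (2 * n + 2) → ℝ) (hr : Function.Injective r) (hr0 : ∀ i, r i ≠ 0) :
    ∑ i : Fin (2 * n + 2),
      ((1 + lam * (r i) ^ 2) * ∏ k ∈ Finset.univ.erase j, ((r i) ^ 2 + (a k) ^ 2)) /
        (r i * ∏ g ∈ Finset.univ.erase i, (r i - r g)) = 0 := by
  classical
  obtain ⟨m, hmj, ham⟩ := hzero
  set f : ℝ[X] := (1 + C lam * X ^ 2) * X *
    ∏ k ∈ (Finset.univ.erase j).erase m, (X ^ 2 + C ((a k) ^ 2)) with hf
  have heval : ∀ x : ℝ, x ≠ 0 →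
      f.eval x = ((1 + lam * x ^ 2) * ∏ k ∈ Finset.univ.erase j, (x ^ 2 + (a k) ^ 2)) / x := by
    intro x hx
    have hm : m ∈ Finset.univ.erase j := Finset.mem_erase.mpr ⟨hmj, Finset.mem_univ m⟩
    rw [← Finset.mul_prod_erase _ _ hm, ham]
    simp only [hf, eval_mul, eval_add, eval_one, eval_pow, eval_X, eval_C, eval_prod]
    field_simp
    ring
  have hcard : #((Finset.univ.erase j).erase m) = n - 2 := by
    rw [Finset.card_erase_of_mem, Finset.card_erase_of_mem (Finset.mem_univ j)]
    · simp; omega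
    · exact Finset.mem_erase.mpr ⟨hmj, Finset.mem_univ m⟩
  have hdeg : f.degree < (#(Finset.univ : Finset (Fin (2 * n + 2))) - 1 : ℕ) := by
    have hnat : f.natDegree ≤ 2 * n := by
      have hA : (1 + C lam * X ^ 2 : ℝ[X]).natDegree ≤ 2 := by
        refine le_trans (natDegree_add_le _ _) (max_le (by simp) ?_)
        refine le_trans (natDegree_C_mul_le _ _) (by simp)
      have hAB : ((1 + C lam * X ^ 2) * X : ℝ[X]).natDegree ≤ 3 := by
        refine le_trans (natDegree_mul_le) ?_
        have := natDegree_X (R := ℝ)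
        omega
      have hP : (∏ k ∈ (Finset.univ.erase j).erase m,
          (X ^ 2 + C ((a k) ^ 2) : ℝ[X])).natDegree ≤ 2 * (n - 2) := by
        refine le_trans (natDegree_prod_le _ _) ?_
        calc ∑ k ∈ (Finset.univ.erase j).erase m, (X ^ 2 + C ((a k) ^ 2) : ℝ[X]).natDegree
            ≤ ∑ _k ∈ (Finset.univ.erase j).erase m, 2 :=
              Finset.sum_le_sum fun k _ =>
                le_trans (natDegree_add_le _ _) (max_le (by simp) (by simp))
          _ = 2 * (n - 2) := by rw [Finset.sum_const, hcard, smul_eq_mul, mul_comm]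
      have := natDegree_mul_le (p := ((1 + C lam * X ^ 2) * X : ℝ[X]))
        (q := ∏ k ∈ (Finset.univ.erase j).erase m, (X ^ 2 + C ((a k) ^ 2) : ℝ[X]))
      rw [← hf] at this
      omega
    refine lt_of_le_of_lt degree_le_natDegree ?_
    rw [Finset.card_univ, Fintype.card_fin]
    exact_mod_cast Nat.lt_of_le_of_lt hnat (by omega)
  have key := sum_eval_div_prod_eq_zero Finset.univ r (hr.injOn) f hdeg
  rw [← key]
  refine Finset.sum_congr rfl fun i _ => ?_
  rw [heval (r i) (hr0 i), div_div]
end
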